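/- Let F be a k-regular graph on r vertices, H an n-vertex blow-up of F with all vertex classes of size at least x and |N(Z)| ≤ s for all vertex classes Z. If rs ≠ kn and e(H) = ns/2 − x(rs − kn)/2, then at least one vertex class of H has size exactly x, and every vertex class V_i with |V_i| > x satisfies |N(V_i)| = s. -/

import Mathlib

/-!
Double counting gives `2 e(H) = ∑_Z |Z| |N(Z)|`, and `k`-regularity of `F` gives
`∑_Z |N(Z)| = k n`. Hence `n s - 2 e(H) - x (r s - k n) = ∑_Z (|Z| - x) (s - |N(Z)|)`, a sum of
nonnegative terms, so the equality hypothesis forces `|Z| = x` or `|N(Z)| = s` for every class.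
If no class had size `x`, summing `|N(Z)| = s` would give `r s = k n`.
-/

open Finset

/-- The blow-up of a graph `F` with class sizes given by `w`. -/
def SimpleGraph.blowup {α : Type*} (F : SimpleGraph α) (w : α → ℕ) :
    SimpleGraph (Σ a, Fin (w a)) where
  Adj x y := F.Adj x.1 y.1
  symm := ⟨fun _ _ h => F.adj_symm h⟩
  loopless := ⟨fun x h => F.loopless.irrefl x.1 h⟩

namespace SimpleGraph

variable {α : Type*} {F : SimpleGraph α}

theorem IsRegularOfDegree.sum_sum_neighborFinset {M : Type*} [AddCommMonoid M] [Fintype α]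
    [DecidableRel F.Adj] {k : ℕ} (hF : F.IsRegularOfDegree k) (f : α → M) :
    ∑ a, ∑ b ∈ F.neighborFinset a, f b = k • ∑ a, f a := by
  rw [Finset.sum_comm' (t' := univ) (s' := fun b => F.neighborFinset b)
    (by simp [adj_comm])]
  simp [hF _, Finset.smul_sum]

theorem neighborFinset_blowup [Fintype α] [DecidableRel F.Adj] (w : α → ℕ)
    (v : Σ a, Fin (w a)) [Fintype ((F.blowup w).neighborSet v)] :
    (F.blowup w).neighborFinset v = (F.neighborFinset v.1).sigma fun _ => univ := by
  ext u
  simp only [mem_neighborFinset, mem_sigma, mem_univ, and_true]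
  rfl

theorem degree_blowup [Fintype α] [DecidableRel F.Adj] (w : α → ℕ) (a : α) (i : Fin (w a))
    [Fintype ((F.blowup w).neighborSet ⟨a, i⟩)] :
    (F.blowup w).degree ⟨a, i⟩ = ∑ b ∈ F.neighborFinset a, w b := by
  simp [← card_neighborFinset_eq_degree, neighborFinset_blowup]

theorem two_mul_card_edgeFinset_blowup [Fintype α] [DecidableRel F.Adj] (w : α → ℕ)
    [DecidableRel (F.blowup w).Adj] :
    2 * #(F.blowup w).edgeFinset = ∑ a, w a * ∑ b ∈ F.neighborFinset a, w b := by
  rw [← sum_degrees_eq_twice_card_edges, Fintype.sum_sigma]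
  refine sum_congr rfl fun a _ => ?_
  simp [degree_blowup]

theorem IsRegularOfDegree.sum_sub_mul_sub_blowup [Fintype α] [DecidableRel F.Adj] {k : ℕ}
    (hF : F.IsRegularOfDegree k) (w : α → ℕ) [DecidableRel (F.blowup w).Adj] (x s : ℤ) :
    ∑ a, ((w a : ℤ) - x) * (s - ∑ b ∈ F.neighborFinset a, (w b : ℤ)) =
      (∑ a, (w a : ℤ)) * s - 2 * #(F.blowup w).edgeFinset -
        x * (Fintype.card α * s - k * ∑ a, (w a : ℤ)) := by
  have htwice : (2 * #(F.blowup w).edgeFinset : ℤ) =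
      ∑ a, (w a : ℤ) * ∑ b ∈ F.neighborFinset a, (w b : ℤ) := by
    exact_mod_cast two_mul_card_edgeFinset_blowup w
  have hreg : ∑ a, ∑ b ∈ F.neighborFinset a, (w b : ℤ) = k * ∑ a, (w a : ℤ) := by
    rw [hF.sum_sum_neighborFinset, nsmul_eq_mul]
  rw [htwice]
  simp only [sub_mul, mul_sub, sum_sub_distrib, ← mul_sum, ← sum_mul, hreg, sum_const, card_univ,
    nsmul_eq_mul]
  ring

end SimpleGraph

open scoped Classical in
/-- Equality case of the edge bound for blow-ups: if `rs ≠ kn` and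
`e(H) = ns/2 - x(rs - kn)/2`, then some vertex class has size exactly `x`,
and every class of size `> x` has neighbourhood of size exactly `s`. -/
theorem stmt_4 {α : Type*} [Fintype α] (F : SimpleGraph α) (k r : ℕ)
    (hreg : F.IsRegularOfDegree k) (hr : Fintype.card α = r)
    (w : α → ℕ) (n s x : ℕ) (hn : n = ∑ a, w a)
    (hx : ∀ a, x ≤ w a)
    (hs : ∀ a, ∑ b ∈ F.neighborFinset a, w b ≤ s)
    (hne : r * s ≠ k * n)
    (heq : (2 * (F.blowup w).edgeFinset.card : ℤ) =
      (n : ℤ) * s - (x : ℤ) * ((r : ℤ) * s - (k : ℤ) * n)) :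
    (∃ a, w a = x) ∧ ∀ a, x < w a → ∑ b ∈ F.neighborFinset a, w b = s := by
  subst hn hr
  have hterm_nonneg : ∀ a ∈ univ,
      0 ≤ ((w a : ℤ) - x) * (s - ∑ b ∈ F.neighborFinset a, (w b : ℤ)) := fun a _ =>
    mul_nonneg (sub_nonneg.2 (by exact_mod_cast hx a)) (sub_nonneg.2 (by exact_mod_cast hs a))
  have hsum_zero : ∑ a, ((w a : ℤ) - x) * (s - ∑ b ∈ F.neighborFinset a, (w b : ℤ)) = 0 := by
    rw [hreg.sum_sub_mul_sub_blowup, heq]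
    push_cast
    ring
  have hcases : ∀ a, w a = x ∨ ∑ b ∈ F.neighborFinset a, w b = s := fun a => by
    have := (sum_eq_zero_iff_of_nonneg hterm_nonneg).1 hsum_zero a (mem_univ a)
    rw [mul_eq_zero, sub_eq_zero, sub_eq_zero, eq_comm (a := (s : ℤ))] at this
    exact_mod_cast this
  refine ⟨?_, fun a ha => (hcases a).resolve_left ha.ne'⟩
  by_contra! hno
  refine hne ?_
  calc Fintype.card α * s = ∑ a, ∑ b ∈ F.neighborFinset a, w b := by
        simp [(hcases _).resolve_left (hno _)]
    _ = k * ∑ a, w a := hreg.sum_sum_neighborFinset w
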